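/- Let K be an H-operator-valued kernel on X which is Γ-invariant and partially positive semidefinite with respect to the partition {X_s}_{s∈S}. The following are equivalent: (1) K is of bounded shift type; (2) there exists a unique family of bounded linear operators Φ(α) : ℛ_{K^{d(α)}} → ℛ_{K^{c(α)}} (α ∈ Γ) such that Φ(αβ) = Φ(α)Φ(β) for composable pairs, Φ(α*) = Φ(α)* for all α ∈ Γ, and Φ(α)K^{d(α)}_x h = K^{c(α)}_{α·x} h for all α ∈ Γ, x ∈ X_{d(α)}, h ∈ H_x; (3) there exists a minimal Γ-invariant Hilbert space linearisation (𝒦, V, Ψ) of K, and it is unique modulo unitary equivalence: for any other minimal Γ-invariant Hilbert space linearisation (𝒦′, V′, Ψ′) of K there exist unitary operators U_s : 𝒦_s → 𝒦′_s (s ∈ S) with U_{c(α)}Ψ(α) = Ψ′(α)U_{d(α)} for all α ∈ Γ and U_{a(x)}V_x = V′_x for all x ∈ X. -/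

import Mathlib

open scoped InnerProductSpace

noncomputable section

universe u uΓ uS v vO w

/-- A `*`-semigroupoid: partially defined multiplication (the product `mul α β`
is subject to the axioms only when `d α = c β`) together with an involution. -/
structure StarSgd (Γ : Type uΓ) (S : Type uS) where
  d : Γ → S
  c : Γ → S
  mul : Γ → Γ → Γ
  star : Γ → Γ
  d_mul : ∀ {α β : Γ}, d α = c β → d (mul α β) = d β
  c_mul : ∀ {α β : Γ}, d α = c β → c (mul α β) = c α
  mul_assoc : ∀ {α β γ : Γ}, d α = c β → d β = c γ →
    mul α (mul β γ) = mul (mul α β) γ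
  d_star : ∀ α, d (star α) = c α
  c_star : ∀ α, c (star α) = d α
  star_star : ∀ α, star (star α) = α
  star_mul : ∀ {α β : Γ}, d α = c β → star (mul α β) = mul (star β) (star α)

/-- A left action of a semigroupoid on a set `X`, with surjective anchor `a`;
`act α x` is subject to the axioms only when `d α = a x`. -/
structure SgdAction (Γ : Type uΓ) (S : Type uS) (X : Type v) (G : StarSgd Γ S) where
  a : X → S
  a_surj : Function.Surjective a
  act : Γ → X → X
  a_act : ∀ {α : Γ} {x : X}, G.d α = a x → a (act α x) = G.c α
  act_mul : ∀ {α β : Γ} {x : X}, G.d β = a x → G.d α = G.c β →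
    act (G.mul α β) x = act α (act β x)

variable {𝕜 : Type u} [RCLike 𝕜] {Γ : Type uΓ} {S : Type uS} {X : Type v}
  {O : Type vO} {E : O → Type w}
  [∀ o, NormedAddCommGroup (E o)] [∀ o, InnerProductSpace 𝕜 (E o)]
  [∀ o, CompleteSpace (E o)]

/-- Transport along an equality of indices: since the Hilbert bundle over `X`
is given as a pullback `x ↦ E (p x)`, equal indices give literally the same
Hilbert space, and the transport is a linear isometry. -/
def castE (𝕜 : Type u) [RCLike 𝕜] {O : Type vO} (E : O → Type w)
    [∀ o, NormedAddCommGroup (E o)] [∀ o, InnerProductSpace 𝕜 (E o)]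
    {o o' : O} (h : o = o') : E o ≃ₗᵢ[𝕜] E o' := by
  subst h; exact LinearIsometryEquiv.refl 𝕜 (E o)

variable {G : StarSgd Γ S} (A : SgdAction Γ S X G) (p : X → O)

/-- `K` is partially Hermitian with respect to the partition of `X` into the
fibres of the anchor map. -/
def PartHermitian (K : ∀ y x : X, E (p x) →L[𝕜] E (p y)) : Prop :=
  ∀ x y : X, A.a x = A.a y → ContinuousLinearMap.adjoint (K x y) = K y x

/-- `K` is partially positive semidefinite with respect to the partition of
`X` into the fibres of the anchor map. -/
def PartPSD (K : ∀ y x : X, E (p x) →L[𝕜] E (p y)) : Prop :=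
  PartHermitian A p K ∧
  ∀ (s : S) (n : ℕ) (x : Fin n → X), (∀ i, A.a (x i) = s) →
    ∀ h : ∀ i, E (p (x i)),
      0 ≤ RCLike.re (∑ i, ∑ j, ⟪K (x j) (x i) (h i), h j⟫_𝕜)

variable (hp : ∀ {α : Γ} {x : X}, G.d α = A.a x → p (A.act α x) = p x)

/-- `K` is `Γ`-invariant: `K(α·x, y) = K(x, α*·y)`, expressed using the
transport isometries coming from the constancy of the bundle on orbits. -/
def GammaInvariant (K : ∀ y x : X, E (p x) →L[𝕜] E (p y)) : Prop :=
  ∀ (α : Γ) (x y : X) (hx : G.d α = A.a x) (hy : G.c α = A.a y) (k : E (p y)),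
    castE 𝕜 E (hp hx) (K (A.act α x) y k) =
      K x (A.act (G.star α) y)
        ((castE 𝕜 E (hp ((G.d_star α).trans hy))).symm k)

/-- `K` is of bounded shift type: for every `α` there is `M_α ≥ 0` dominating
the shifted quadratic forms by the original ones (stated via finite families of
points in the fibre `X_{d(α)}`). -/
def BoundedShiftType (K : ∀ y x : X, E (p x) →L[𝕜] E (p y)) : Prop :=
  ∀ α : Γ, ∃ M : ℝ, 0 ≤ M ∧
    ∀ (n : ℕ) (z : Fin n → X) (hz : ∀ i, G.d α = A.a (z i))
      (g : ∀ i, E (p (z i))),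
      RCLike.re (∑ i, ∑ j, ⟪K (A.act α (z j)) (A.act α (z i))
          ((castE 𝕜 E (hp (hz i))).symm (g i)),
          (castE 𝕜 E (hp (hz j))).symm (g j)⟫_𝕜) ≤
        M * RCLike.re (∑ i, ∑ j, ⟪K (z j) (z i) (g i), g j⟫_𝕜)

universe w'

/-- A bundled Hilbert space over `𝕜`. -/
structure HSp (𝕜 : Type u) [RCLike 𝕜] : Type (max u (w' + 1)) where
  carrier : Type w'
  [ng : NormedAddCommGroup carrier]
  [ip : InnerProductSpace 𝕜 carrier]
  [cs : CompleteSpace carrier]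

attribute [instance] HSp.ng HSp.ip HSp.cs

/-- Transport between the members of a bundle of Hilbert spaces along an
equality of indices. -/
def castH (𝕜 : Type u) [RCLike 𝕜] {S : Type uS} (𝒦 : S → HSp.{u, w'} 𝕜)
    {s t : S} (h : s = t) : (𝒦 s).carrier ≃ₗᵢ[𝕜] (𝒦 t).carrier := by
  subst h; exact LinearIsometryEquiv.refl 𝕜 (𝒦 s).carrier

/-- A reproducing kernel Hilbert space of sections over the fibre `X_s`. -/
structure RKHSOn (𝕜 : Type u) [RCLike 𝕜] {Γ : Type uΓ} {S : Type uS}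
    {X : Type v} {O : Type vO} (E : O → Type w)
    [∀ o, NormedAddCommGroup (E o)] [∀ o, InnerProductSpace 𝕜 (E o)]
    [∀ o, CompleteSpace (E o)]
    {G : StarSgd Γ S} (A : SgdAction Γ S X G) (p : X → O)
    (K : ∀ y x : X, E (p x) →L[𝕜] E (p y)) (s : S) :
    Type (max u v w (w' + 1)) where
  carrier : Type w'
  [ng : NormedAddCommGroup carrier]
  [ip : InnerProductSpace 𝕜 carrier]
  [cs : CompleteSpace carrier]
  emb : carrier →ₗ[𝕜] ∀ x : {x : X // A.a x = s}, E (p x.val)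
  emb_inj : Function.Injective emb
  Kx : ∀ x : {x : X // A.a x = s}, E (p x.val) → carrier
  emb_Kx : ∀ (x : {x : X // A.a x = s}) (h : E (p x.val))
    (y : {x : X // A.a x = s}), emb (Kx x h) y = K y.val x.val h
  repro : ∀ (f : carrier) (x : {x : X // A.a x = s}) (h : E (p x.val)),
    ⟪emb f x, h⟫_𝕜 = ⟪f, Kx x h⟫_𝕜

attribute [instance] RKHSOn.ng RKHSOn.ip RKHSOn.cs

/-- Transport between the members of a bundle of reproducing kernel Hilbert
spaces along an equality of indices. -/
def castR {K : ∀ y x : X, E (p x) →L[𝕜] E (p y)}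
    (R : ∀ s : S, RKHSOn.{u, uΓ, uS, v, vO, w, w'} 𝕜 E A p K s)
    {s t : S} (h : s = t) : (R s).carrier ≃ₗᵢ[𝕜] (R t).carrier := by
  subst h; exact LinearIsometryEquiv.refl 𝕜 (R s).carrier

/-- A `Γ`-invariant Hilbert space linearisation of `K` (with a bounded
`*`-representation `Ψ`). -/
structure InvLin (𝕜 : Type u) [RCLike 𝕜] {Γ : Type uΓ} {S : Type uS}
    {X : Type v} {O : Type vO} (E : O → Type w)
    [∀ o, NormedAddCommGroup (E o)] [∀ o, InnerProductSpace 𝕜 (E o)]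
    [∀ o, CompleteSpace (E o)]
    {G : StarSgd Γ S} (A : SgdAction Γ S X G) (p : X → O)
    (hp : ∀ {α : Γ} {x : X}, G.d α = A.a x → p (A.act α x) = p x)
    (K : ∀ y x : X, E (p x) →L[𝕜] E (p y)) :
    Type (max u uΓ uS v w (w' + 1)) where
  Ksp : S → HSp.{u, w'} 𝕜
  V : ∀ x : X, E (p x) →L[𝕜] (Ksp (A.a x)).carrier
  lin : ∀ (x y : X) (hxy : A.a y = A.a x) (k : E (p y)) (h : E (p x)),
    ⟪(K x y) k, h⟫_𝕜 = ⟪castH 𝕜 Ksp hxy (V y k), V x h⟫_𝕜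
  Ψ : ∀ α : Γ, (Ksp (G.d α)).carrier →L[𝕜] (Ksp (G.c α)).carrier
  Ψ_mul : ∀ (α β : Γ) (hc : G.d α = G.c β) (f : (Ksp (G.d β)).carrier),
    Ψ (G.mul α β) (castH 𝕜 Ksp (G.d_mul hc).symm f) =
      castH 𝕜 Ksp (G.c_mul hc).symm (Ψ α (castH 𝕜 Ksp hc.symm (Ψ β f)))
  Ψ_star : ∀ (α : Γ) (g : (Ksp (G.c α)).carrier),
    castH 𝕜 Ksp (G.c_star α) (Ψ (G.star α) (castH 𝕜 Ksp (G.d_star α).symm g)) =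
      ContinuousLinearMap.adjoint (Ψ α) g
  Ψ_shift : ∀ (α : Γ) (x : X) (hx : G.d α = A.a x) (h : E (p x)),
    Ψ α (castH 𝕜 Ksp hx.symm (V x h)) =
      castH 𝕜 Ksp (A.a_act hx) (V (A.act α x) ((castE 𝕜 E (hp hx)).symm h))

/-- Minimality of a `Γ`-invariant linearisation. -/
def InvLin.Minimal {𝕜 : Type u} [RCLike 𝕜] {Γ : Type uΓ} {S : Type uS}
    {X : Type v} {O : Type vO} {E : O → Type w}
    [∀ o, NormedAddCommGroup (E o)] [∀ o, InnerProductSpace 𝕜 (E o)]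
    [∀ o, CompleteSpace (E o)]
    {G : StarSgd Γ S} {A : SgdAction Γ S X G} {p : X → O}
    {hp : ∀ {α : Γ} {x : X}, G.d α = A.a x → p (A.act α x) = p x}
    {K : ∀ y x : X, E (p x) →L[𝕜] E (p y)}
    (L : InvLin.{u, uΓ, uS, v, vO, w, w'} 𝕜 E A p hp K) : Prop :=
  ∀ s : S, Dense (↑(Submodule.span 𝕜 (⋃ x : {x : X // A.a x = s},
    Set.range fun h : E (p x.val) => castH 𝕜 L.Ksp x.2 (L.V x.val h))) :
      Set (L.Ksp s).carrier)

/-! A linearisation `(𝒦, V)` of `K` turns the quadratic forms of `K` into squared norms,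
`re Σ ⟪K(x_j, x_i) g_i, g_j⟫ = ‖Σ V_{x_i} g_i‖²`. Hence any `Ψ(α)` with `Ψ(α) V_x = V_{α·x}`
yields the bounded shift inequality with `M_α = ‖Ψ(α)‖²`; conversely, on a minimal linearisation
the bounded shift inequality says that `V_x h ↦ V_{α·x} h` is bounded on the dense span of the
`V_x h`, so it extends to a unique `Ψ(α)`. Multiplicativity of `Ψ` comes from
`(αβ)·x = α·(β·x)` and `Ψ(α*) = Ψ(α)*` from `Γ`-invariance, both checked on these dense spans.
Two minimal linearisations have the same Gram data `⟪V_x h, V_y k⟫ = ⟪K(y, x) h, k⟫`, so they are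
related by unitaries, which then intertwine the representations. The reproducing kernel Hilbert
spaces form a minimal linearisation, which gives (2), and an isometric copy of them inside the
spaces of sections over the fibres gives one in the universe required by (3). -/

set_option linter.unusedSectionVars false

universe w₁ w₂

section Casts

theorem castE_symm {o o' : O} (h : o = o') : (castE 𝕜 E h).symm = castE 𝕜 E h.symm := by
  subst h; rfl

theorem castE_castE {o o' o'' : O} (h : o = o') (h' : o' = o'') (e : E o) :
    castE 𝕜 E h' (castE 𝕜 E h e) = castE 𝕜 E (h.trans h') e := by
  subst h h'; rfl

variable {𝒦 : S → HSp.{u, w₁} 𝕜}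

theorem castH_castH {s t r : S} (h : s = t) (h' : t = r) (f : (𝒦 s).carrier) :
    castH 𝕜 𝒦 h' (castH 𝕜 𝒦 h f) = castH 𝕜 𝒦 (h.trans h') f := by
  subst h h'; rfl

theorem inner_castH_castH {s t r : S} (h : s = r) (h' : t = r) (f : (𝒦 s).carrier)
    (f' : (𝒦 t).carrier) :
    ⟪castH 𝕜 𝒦 h f, castH 𝕜 𝒦 h' f'⟫_𝕜 = ⟪castH 𝕜 𝒦 (h.trans h'.symm) f, f'⟫_𝕜 := by
  subst h'; rfl

theorem castH_apply_linearIsometryEquiv {𝒦' : S → HSp.{u, w₂} 𝕜}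
    (U : ∀ s, (𝒦 s).carrier ≃ₗᵢ[𝕜] (𝒦' s).carrier) {s t : S} (h : s = t)
    (f : (𝒦 s).carrier) : castH 𝕜 𝒦' h (U s f) = U t (castH 𝕜 𝒦 h f) := by
  subst h; rfl

def castHL (𝒦 : S → HSp.{u, w₁} 𝕜) {s t : S} (h : s = t) :
    (𝒦 s).carrier →L[𝕜] (𝒦 t).carrier :=
  (castH 𝕜 𝒦 h).toLinearIsometry.toContinuousLinearMap

@[simp]
theorem castHL_apply {s t : S} (h : s = t) (f : (𝒦 s).carrier) :
    castHL 𝒦 h f = castH 𝕜 𝒦 h f :=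
  rfl

end Casts

section Hilbert

variable {ι κ F F' : Type*} [NormedAddCommGroup F] [InnerProductSpace 𝕜 F]
  [NormedAddCommGroup F'] [InnerProductSpace 𝕜 F']

theorem denseRange_linearCombination_iff {v : ι → F} :
    DenseRange (Finsupp.linearCombination 𝕜 v) ↔
      Dense (Submodule.span 𝕜 (Set.range v) : Set F) := by
  rw [DenseRange, ← LinearMap.coe_range, Finsupp.range_linearCombination]

theorem exists_continuousLinearMap_apply_eq_of_norm_le [CompleteSpace F'] {v : ι → F}
    {w : ι → F'} (hv : Dense (Submodule.span 𝕜 (Set.range v) : Set F)) {C : ℝ}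
    (h : ∀ c : ι →₀ 𝕜, ‖Finsupp.linearCombination 𝕜 w c‖ ≤
      C * ‖Finsupp.linearCombination 𝕜 v c‖) :
    ∃ T : F →L[𝕜] F', ∀ i, T (v i) = w i := by
  refine ⟨(Finsupp.linearCombination 𝕜 w).extendOfNorm (Finsupp.linearCombination 𝕜 v),
    fun i => ?_⟩
  have := LinearMap.extendOfNorm_eq (f := Finsupp.linearCombination 𝕜 w)
    (e := Finsupp.linearCombination 𝕜 v) (denseRange_linearCombination_iff.2 hv) ⟨C, h⟩
    (Finsupp.single i 1)
  rwa [Finsupp.linearCombination_single, Finsupp.linearCombination_single, one_smul,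
    one_smul] at this

theorem inner_linearCombination_self_eq {v : ι → F} {w : ι → F'}
    (h : ∀ i j, ⟪v i, v j⟫_𝕜 = ⟪w i, w j⟫_𝕜) (c : ι →₀ 𝕜) :
    ⟪Finsupp.linearCombination 𝕜 v c, Finsupp.linearCombination 𝕜 v c⟫_𝕜 =
      ⟪Finsupp.linearCombination 𝕜 w c, Finsupp.linearCombination 𝕜 w c⟫_𝕜 := by
  simp only [Finsupp.linearCombination_apply, Finsupp.sum, sum_inner, inner_sum,
    inner_smul_left, inner_smul_right, h]

theorem exists_linearIsometryEquiv_apply_eq_of_inner_eq [CompleteSpace F] [CompleteSpace F']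
    {v : ι → F} {w : ι → F'} (hv : Dense (Submodule.span 𝕜 (Set.range v) : Set F))
    (hw : Dense (Submodule.span 𝕜 (Set.range w) : Set F'))
    (h : ∀ i j, ⟪v i, v j⟫_𝕜 = ⟪w i, w j⟫_𝕜) :
    ∃ U : F ≃ₗᵢ[𝕜] F', ∀ i, U (v i) = w i := by
  have hnorm (c : ι →₀ 𝕜) :
      ‖Finsupp.linearCombination 𝕜 w c‖ = ‖Finsupp.linearCombination 𝕜 v c‖ := by
    rw [@norm_eq_sqrt_re_inner 𝕜, @norm_eq_sqrt_re_inner 𝕜,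
      inner_linearCombination_self_eq h]
  have hv' := denseRange_linearCombination_iff.2 hv
  refine ⟨(LinearEquiv.refl 𝕜 (ι →₀ 𝕜)).extendOfIsometry _ _ hv'
    (denseRange_linearCombination_iff.2 hw) hnorm, fun i => ?_⟩
  have := LinearMap.extendOfNorm_eq
    (f := Finsupp.linearCombination 𝕜 w ∘ₗ (LinearEquiv.refl 𝕜 (ι →₀ 𝕜)).toLinearMap)
    (e := Finsupp.linearCombination 𝕜 v) hv' ⟨1, fun c => by simp [hnorm]⟩ (Finsupp.single i 1)
  simp only [LinearMap.comp_apply, LinearEquiv.coe_toLinearMap, LinearEquiv.refl_apply,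
    Finsupp.linearCombination_single, one_smul] at this
  exact this

theorem ContinuousLinearMap.eq_adjoint_of_dense_span [CompleteSpace F] [CompleteSpace F']
    {v : ι → F} {w : κ → F'} (hv : Dense (Submodule.span 𝕜 (Set.range v) : Set F))
    (hw : Dense (Submodule.span 𝕜 (Set.range w) : Set F')) {T : F' →L[𝕜] F} {B : F →L[𝕜] F'}
    (h : ∀ i j, ⟪T (w j), v i⟫_𝕜 = ⟪w j, B (v i)⟫_𝕜) :
    T = ContinuousLinearMap.adjoint B := by
  refine ContinuousLinearMap.ext_on hw ?_
  rintro _ ⟨j, rfl⟩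
  refine ext_inner_right 𝕜 fun f => DFunLike.congr_fun (ContinuousLinearMap.ext_on hv
    (f := innerSL 𝕜 (T (w j))) (g := innerSL 𝕜 (ContinuousLinearMap.adjoint B (w j))) ?_) f
  rintro _ ⟨i, rfl⟩
  simp [h, ContinuousLinearMap.adjoint_inner_left]

@[reducible]
def LinearEquiv.innerProductCore {N : Type*} [AddCommGroup N] [Module 𝕜 N] (e : N ≃ₗ[𝕜] F) :
    InnerProductSpace.Core 𝕜 N where
  inner a b := ⟪e a, e b⟫_𝕜
  conj_inner_symm _ _ := inner_conj_symm _ _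
  re_inner_nonneg _ := inner_self_nonneg
  add_left _ _ _ := by simp only [map_add, inner_add_left]
  smul_left _ _ _ := by simp only [map_smul, inner_smul_left]
  definite a ha := e.injective (by rw [inner_self_eq_zero.mp ha, map_zero])

theorem HSp.exists_linearIsometryEquiv_of_injective [CompleteSpace F] {M : Type w₂}
    [AddCommGroup M] [Module 𝕜 M] {f : F →ₗ[𝕜] M} (hf : Function.Injective f) :
    ∃ H : HSp.{u, w₂} 𝕜, Nonempty (F ≃ₗᵢ[𝕜] H.carrier) := by
  let e := (LinearEquiv.ofInjective f hf).symm
  let _ : NormedAddCommGroup (LinearMap.range f) := e.innerProductCore.toNormedAddCommGroup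
  let _ : InnerProductSpace 𝕜 (LinearMap.range f) :=
    InnerProductSpace.ofCore e.innerProductCore.toCore
  let iso : LinearMap.range f ≃ₗᵢ[𝕜] F := ⟨e, fun a => by
    rw [@norm_eq_sqrt_re_inner 𝕜 F, @norm_eq_sqrt_re_inner 𝕜 (LinearMap.range f)]; rfl⟩
  have : CompleteSpace (LinearMap.range f) := iso.toIsometryEquiv.completeSpace
  exact ⟨⟨LinearMap.range f⟩, ⟨iso.symm⟩⟩

end Hilbert

section Linearisation

variable {A p} {hp}
variable {K : ∀ y x : X, E (p x) →L[𝕜] E (p y)} {𝒦 : S → HSp.{u, w₁} 𝕜}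
  {𝒦' : S → HSp.{u, w₂} 𝕜}

variable (A p) in
def IsLinearisation (K : ∀ y x : X, E (p x) →L[𝕜] E (p y)) (𝒦 : S → HSp.{u, w₁} 𝕜)
    (V : ∀ x : X, E (p x) →L[𝕜] (𝒦 (A.a x)).carrier) : Prop :=
  ∀ (x y : X) (hxy : A.a y = A.a x) (k : E (p y)) (h : E (p x)),
    ⟪K x y k, h⟫_𝕜 = ⟪castH 𝕜 𝒦 hxy (V y k), V x h⟫_𝕜

def fibreFeature (V : ∀ x : X, E (p x) →L[𝕜] (𝒦 (A.a x)).carrier) (s : S)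
    (q : Σ x : {x : X // A.a x = s}, E (p x.val)) : (𝒦 s).carrier :=
  castH 𝕜 𝒦 q.1.2 (V q.1.1 q.2)

variable (A p) in
def IsMinimalLinearisation (K : ∀ y x : X, E (p x) →L[𝕜] E (p y))
    (𝒦 : S → HSp.{u, w₁} 𝕜) (V : ∀ x : X, E (p x) →L[𝕜] (𝒦 (A.a x)).carrier) : Prop :=
  IsLinearisation A p K 𝒦 V ∧
    ∀ s, Dense (Submodule.span 𝕜 (Set.range (fibreFeature V s)) : Set (𝒦 s).carrier)

def IsStarRepresentation (𝒦 : S → HSp.{u, w₁} 𝕜)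
    (Ψ : ∀ α : Γ, (𝒦 (G.d α)).carrier →L[𝕜] (𝒦 (G.c α)).carrier) : Prop :=
  (∀ (α β : Γ) (hc : G.d α = G.c β) (f : (𝒦 (G.d β)).carrier),
    Ψ (G.mul α β) (castH 𝕜 𝒦 (G.d_mul hc).symm f) =
      castH 𝕜 𝒦 (G.c_mul hc).symm (Ψ α (castH 𝕜 𝒦 hc.symm (Ψ β f)))) ∧
  ∀ (α : Γ) (g : (𝒦 (G.c α)).carrier),
    castH 𝕜 𝒦 (G.c_star α) (Ψ (G.star α) (castH 𝕜 𝒦 (G.d_star α).symm g)) =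
      ContinuousLinearMap.adjoint (Ψ α) g

variable (hp) in
def IntertwinesShift (V : ∀ x : X, E (p x) →L[𝕜] (𝒦 (A.a x)).carrier)
    (Ψ : ∀ α : Γ, (𝒦 (G.d α)).carrier →L[𝕜] (𝒦 (G.c α)).carrier) : Prop :=
  ∀ (α : Γ) (x : X) (hx : G.d α = A.a x) (h : E (p x)),
    Ψ α (castH 𝕜 𝒦 hx.symm (V x h)) =
      castH 𝕜 𝒦 (A.a_act hx) (V (A.act α x) ((castE 𝕜 E (hp hx)).symm h))

theorem castH_congr_point (V : ∀ x : X, E (p x) →L[𝕜] (𝒦 (A.a x)).carrier) {s : S} {x y : X}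
    (hxy : x = y) (hx : A.a x = s) (hy : A.a y = s) (h : E (p x)) :
    castH 𝕜 𝒦 hx (V x h) = castH 𝕜 𝒦 hy (V y (castE 𝕜 E (congrArg p hxy) h)) := by
  subst hxy; rfl

variable (hp) in
theorem re_sum_shift_le_of_fin {α : Γ} {M : ℝ}
    (hM : ∀ (n : ℕ) (z : Fin n → X) (hz : ∀ i, G.d α = A.a (z i)) (g : ∀ i, E (p (z i))),
      RCLike.re (∑ i, ∑ j, ⟪K (A.act α (z j)) (A.act α (z i))
          ((castE 𝕜 E (hp (hz i))).symm (g i)), (castE 𝕜 E (hp (hz j))).symm (g j)⟫_𝕜) ≤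
        M * RCLike.re (∑ i, ∑ j, ⟪K (z j) (z i) (g i), g j⟫_𝕜))
    {ι : Type*} (t : Finset ι) (z : ι → X) (hz : ∀ i, G.d α = A.a (z i))
    (g : ∀ i, E (p (z i))) :
    RCLike.re (∑ i ∈ t, ∑ j ∈ t, ⟪K (A.act α (z j)) (A.act α (z i))
        ((castE 𝕜 E (hp (hz i))).symm (g i)), (castE 𝕜 E (hp (hz j))).symm (g j)⟫_𝕜) ≤
      M * RCLike.re (∑ i ∈ t, ∑ j ∈ t, ⟪K (z j) (z i) (g i), g j⟫_𝕜) := by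
  have hfin (φ : ι → 𝕜) : ∑ i ∈ t, φ i = ∑ k, φ (t.equivFin.symm k) :=
    (t.sum_coe_sort φ).symm.trans (Equiv.sum_comp t.equivFin.symm _).symm
  simp only [hfin]
  exact hM _ _ (fun k => hz _) (fun k => g _)

namespace IsLinearisation

variable {V : ∀ x : X, E (p x) →L[𝕜] (𝒦 (A.a x)).carrier}

theorem inner_castH (hV : IsLinearisation A p K 𝒦 V) {s : S} {x y : X} (hx : A.a x = s)
    (hy : A.a y = s) (h : E (p x)) (k : E (p y)) :
    ⟪castH 𝕜 𝒦 hx (V x h), castH 𝕜 𝒦 hy (V y k)⟫_𝕜 = ⟪K y x h, k⟫_𝕜 := by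
  rw [inner_castH_castH, hV]

theorem norm_sum_sq (hV : IsLinearisation A p K 𝒦 V) {s : S} {ι : Type*} (t : Finset ι)
    (z : ι → X) (hz : ∀ i, A.a (z i) = s) (g : ∀ i, E (p (z i))) :
    ‖∑ i ∈ t, castH 𝕜 𝒦 (hz i) (V (z i) (g i))‖ ^ 2 =
      RCLike.re (∑ i ∈ t, ∑ j ∈ t, ⟪K (z j) (z i) (g i), g j⟫_𝕜) := by
  rw [← inner_self_eq_norm_sq (𝕜 := 𝕜), sum_inner]
  simp only [inner_sum, hV.inner_castH]

theorem boundedShiftType (hV : IsLinearisation A p K 𝒦 V)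
    {Ψ : ∀ α : Γ, (𝒦 (G.d α)).carrier →L[𝕜] (𝒦 (G.c α)).carrier}
    (hΨ : IntertwinesShift hp V Ψ) : BoundedShiftType A p hp K := by
  intro α
  refine ⟨‖Ψ α‖ ^ 2, sq_nonneg _, fun n z hz g => ?_⟩
  have hshift : ∑ i, castH 𝕜 𝒦 (A.a_act (hz i))
      (V (A.act α (z i)) ((castE 𝕜 E (hp (hz i))).symm (g i))) =
      Ψ α (∑ i, castH 𝕜 𝒦 (hz i).symm (V (z i) (g i))) := by
    rw [map_sum]
    exact Finset.sum_congr rfl fun i _ => (hΨ α (z i) (hz i) (g i)).symm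
  rw [← hV.norm_sum_sq _ _ (fun i => A.a_act (hz i)),
    ← hV.norm_sum_sq _ _ (fun i => (hz i).symm), hshift, ← mul_pow]
  exact pow_le_pow_left₀ (norm_nonneg _) ((Ψ α).le_opNorm _) 2

end IsLinearisation
namespace IsMinimalLinearisation

variable {V : ∀ x : X, E (p x) →L[𝕜] (𝒦 (A.a x)).carrier}
  {Ψ Ψ' : ∀ α : Γ, (𝒦 (G.d α)).carrier →L[𝕜] (𝒦 (G.c α)).carrier}

theorem ext (hV : IsMinimalLinearisation A p K 𝒦 V) {s : S} {F : Type*} [NormedAddCommGroup F]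
    [NormedSpace 𝕜 F] {T T' : (𝒦 s).carrier →L[𝕜] F}
    (h : ∀ (x : X) (hx : A.a x = s) (k : E (p x)),
      T (castH 𝕜 𝒦 hx (V x k)) = T' (castH 𝕜 𝒦 hx (V x k))) : T = T' :=
  ContinuousLinearMap.ext_on (hV.2 s) (by rintro _ ⟨⟨⟨x, hx⟩, k⟩, rfl⟩; exact h x hx k)

theorem exists_intertwinesShift (hV : IsMinimalLinearisation A p K 𝒦 V)
    (hB : BoundedShiftType A p hp K) : ∃ Ψ, IntertwinesShift hp V Ψ := by
  have key (α : Γ) : ∃ T : (𝒦 (G.d α)).carrier →L[𝕜] (𝒦 (G.c α)).carrier,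
      ∀ q : Σ x : {x : X // A.a x = G.d α}, E (p x.val), T (fibreFeature V _ q) =
        castH 𝕜 𝒦 (A.a_act q.1.2.symm)
          (V (A.act α q.1) ((castE 𝕜 E (hp q.1.2.symm)).symm q.2)) := by
    obtain ⟨M, hM0, hM⟩ := hB α
    refine exists_continuousLinearMap_apply_eq_of_norm_le (hV.2 _) (C := √M) fun c => ?_
    have hsq : ‖Finsupp.linearCombination 𝕜 (fun q : Σ x : {x : X // A.a x = G.d α},
          E (p x.val) => castH 𝕜 𝒦 (A.a_act q.1.2.symm)
            (V (A.act α q.1) ((castE 𝕜 E (hp q.1.2.symm)).symm q.2))) c‖ ^ 2 ≤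
        M * ‖Finsupp.linearCombination 𝕜 (fibreFeature V _) c‖ ^ 2 := by
      simp only [Finsupp.linearCombination_apply, Finsupp.sum, fibreFeature, ← map_smul]
      rw [hV.1.norm_sum_sq, hV.1.norm_sum_sq]
      exact re_sum_shift_le_of_fin hp hM c.support (fun q => q.1.1) (fun q => q.1.2.symm)
        (fun q => c q • q.2)
    refine le_of_pow_le_pow_left₀ two_ne_zero (by positivity) ?_
    rwa [mul_pow, Real.sq_sqrt hM0]
  choose Ψ hΨ using key
  exact ⟨Ψ, fun α x hx h => hΨ α ⟨⟨x, hx.symm⟩, h⟩⟩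

theorem mul_of_intertwinesShift (hV : IsMinimalLinearisation A p K 𝒦 V)
    (hΨ : IntertwinesShift hp V Ψ) (α β : Γ) (hc : G.d α = G.c β) (f : (𝒦 (G.d β)).carrier) :
    Ψ (G.mul α β) (castH 𝕜 𝒦 (G.d_mul hc).symm f) =
      castH 𝕜 𝒦 (G.c_mul hc).symm (Ψ α (castH 𝕜 𝒦 hc.symm (Ψ β f))) := by
  have key : (Ψ (G.mul α β)).comp (castHL 𝒦 (G.d_mul hc).symm) =
      (castHL 𝒦 (G.c_mul hc).symm).comp ((Ψ α).comp ((castHL 𝒦 hc.symm).comp (Ψ β))) := by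
    refine hV.ext fun x hx h => ?_
    have hαβx : G.d (G.mul α β) = A.a x := (G.d_mul hc).trans hx.symm
    have hβx : G.d α = A.a (A.act β x) := hc.trans (A.a_act hx.symm).symm
    simp only [ContinuousLinearMap.comp_apply, castHL_apply, castH_castH]
    rw [hΨ _ x hαβx, hΨ β x hx.symm, castH_castH, hΨ α _ hβx, castH_castH,
      castH_congr_point V (A.act_mul hx.symm hc) _
        ((A.a_act hβx).trans (G.c_mul hc).symm)]
    simp only [castE_symm, castE_castE]
  exact DFunLike.congr_fun key f

theorem star_of_intertwinesShift (hV : IsMinimalLinearisation A p K 𝒦 V)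
    (hKinv : GammaInvariant A p hp K) (hΨ : IntertwinesShift hp V Ψ) (α : Γ)
    (g : (𝒦 (G.c α)).carrier) :
    castH 𝕜 𝒦 (G.c_star α) (Ψ (G.star α) (castH 𝕜 𝒦 (G.d_star α).symm g)) =
      ContinuousLinearMap.adjoint (Ψ α) g := by
  have key : (castHL 𝒦 (G.c_star α)).comp ((Ψ (G.star α)).comp
      (castHL 𝒦 (G.d_star α).symm)) = ContinuousLinearMap.adjoint (Ψ α) := by
    refine ContinuousLinearMap.eq_adjoint_of_dense_span (hV.2 _) (hV.2 _) ?_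
    rintro ⟨⟨x, hx⟩, h⟩ ⟨⟨y, hy⟩, k⟩
    -- the sides reduce to `⟪K(x, α*·y) k, h⟫` and `⟪K(α·x, y) k, h⟫`, equal by `Γ`-invariance
    simp only [fibreFeature, ContinuousLinearMap.comp_apply, castHL_apply, castH_castH]
    rw [hΨ _ y ((G.d_star α).trans hy.symm), castH_castH, hΨ α x hx.symm, hV.1.inner_castH,
      hV.1.inner_castH, ← LinearIsometryEquiv.inner_map_eq_flip, hKinv α x y hx.symm hy.symm]
  exact DFunLike.congr_fun key g

theorem isStarRepresentation (hV : IsMinimalLinearisation A p K 𝒦 V)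
    (hKinv : GammaInvariant A p hp K) (hΨ : IntertwinesShift hp V Ψ) :
    IsStarRepresentation 𝒦 Ψ :=
  ⟨hV.mul_of_intertwinesShift hΨ, hV.star_of_intertwinesShift hKinv hΨ⟩

theorem intertwinesShift_unique (hV : IsMinimalLinearisation A p K 𝒦 V)
    (hΨ : IntertwinesShift hp V Ψ) (hΨ' : IntertwinesShift hp V Ψ') : Ψ' = Ψ :=
  funext fun α => hV.ext fun x hx h => (hΨ' α x hx.symm h).trans (hΨ α x hx.symm h).symm

theorem exists_linearIsometryEquiv {V' : ∀ x : X, E (p x) →L[𝕜] (𝒦' (A.a x)).carrier}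
    {Ψ' : ∀ α : Γ, (𝒦' (G.d α)).carrier →L[𝕜] (𝒦' (G.c α)).carrier}
    (hV : IsMinimalLinearisation A p K 𝒦 V) (hV' : IsMinimalLinearisation A p K 𝒦' V')
    (hΨ : IntertwinesShift hp V Ψ) (hΨ' : IntertwinesShift hp V' Ψ') :
    ∃ U : ∀ s : S, (𝒦 s).carrier ≃ₗᵢ[𝕜] (𝒦' s).carrier,
      (∀ (α : Γ) (f : (𝒦 (G.d α)).carrier), U (G.c α) (Ψ α f) = Ψ' α (U (G.d α) f)) ∧
      ∀ (x : X) (h : E (p x)), U (A.a x) (V x h) = V' x h := by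
  have key (s : S) : ∃ U : (𝒦 s).carrier ≃ₗᵢ[𝕜] (𝒦' s).carrier,
      ∀ q, U (fibreFeature V s q) = fibreFeature V' s q :=
    exists_linearIsometryEquiv_apply_eq_of_inner_eq (hV.2 s) (hV'.2 s) fun q q' => by
      rw [fibreFeature, fibreFeature, fibreFeature, fibreFeature, hV.1.inner_castH,
        hV'.1.inner_castH]
  choose U hU using key
  have hUV (s : S) (x : X) (hx : A.a x = s) (h : E (p x)) :
      U s (castH 𝕜 𝒦 hx (V x h)) = castH 𝕜 𝒦' hx (V' x h) :=
    hU s ⟨⟨x, hx⟩, h⟩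
  refine ⟨U, fun α f => ?_, fun x h => hUV _ x rfl h⟩
  have key : (U (G.c α)).toLinearIsometry.toContinuousLinearMap.comp (Ψ α) =
      (Ψ' α).comp (U (G.d α)).toLinearIsometry.toContinuousLinearMap := by
    refine hV.ext fun x hx h => ?_
    simp only [ContinuousLinearMap.comp_apply, LinearIsometry.coe_toContinuousLinearMap,
      LinearIsometryEquiv.coe_toLinearIsometry]
    rw [hΨ α x hx.symm, hUV, hUV, hΨ' α x hx.symm]
  exact DFunLike.congr_fun key f

theorem map (hV : IsMinimalLinearisation A p K 𝒦 V)
    (U : ∀ s : S, (𝒦 s).carrier ≃ₗᵢ[𝕜] (𝒦' s).carrier) :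
    IsMinimalLinearisation A p K 𝒦'
      (fun x => (U (A.a x)).toLinearIsometry.toContinuousLinearMap.comp (V x)) := by
  refine ⟨fun x y hxy k h => ?_, fun s => ?_⟩
  · simp only [ContinuousLinearMap.comp_apply, LinearIsometry.coe_toContinuousLinearMap,
      LinearIsometryEquiv.coe_toLinearIsometry]
    rw [castH_apply_linearIsometryEquiv, LinearIsometryEquiv.inner_map_map, hV.1]
  · have hrange : Set.range (fibreFeature (fun x =>
        (U (A.a x)).toLinearIsometry.toContinuousLinearMap.comp (V x)) s) =
        U s '' Set.range (fibreFeature V s) := by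
      rw [← Set.range_comp]
      congr 1
      funext q
      exact castH_apply_linearIsometryEquiv U q.1.2 _
    rw [hrange]
    refine Dense.mono (Submodule.image_span_subset_span (U s).toLinearEquiv.toLinearMap _) ?_
    exact (U s).surjective.denseRange.dense_image (U s).continuous (hV.2 s)

end IsMinimalLinearisation

theorem InvLin.minimal_iff (L : InvLin.{u, uΓ, uS, v, vO, w, w₁} 𝕜 E A p hp K) :
    L.Minimal ↔
      ∀ s, Dense (Submodule.span 𝕜 (Set.range (fibreFeature L.V s)) : Set (L.Ksp s).carrier) := by
  simp only [InvLin.Minimal, Set.range_sigma_eq_iUnion_range]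
  rfl

namespace RKHSOn

section

variable {s : S} (R : RKHSOn.{u, uΓ, uS, v, vO, w, w'} 𝕜 E A p K s)

theorem inner_Kx (x y : {x : X // A.a x = s}) (h : E (p x.val)) (k : E (p y.val)) :
    ⟪R.Kx x h, R.Kx y k⟫_𝕜 = ⟪K y.val x.val h, k⟫_𝕜 := by
  rw [← R.repro, R.emb_Kx]

def kernelCLM (x : {x : X // A.a x = s}) : E (p x.val) →L[𝕜] R.carrier :=
  LinearMap.mkContinuous
    { toFun := R.Kx x
      map_add' := fun h k => R.emb_inj <| funext fun y => by
        simp only [map_add, Pi.add_apply, R.emb_Kx]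
      map_smul' := fun c h => R.emb_inj <| funext fun y => by
        simp only [map_smul, Pi.smul_apply, R.emb_Kx, RingHom.id_apply] }
    √‖K x.val x.val‖ fun h => by
      refine le_of_pow_le_pow_left₀ two_ne_zero (by positivity) ?_
      rw [mul_pow, Real.sq_sqrt (norm_nonneg _), LinearMap.coe_mk, AddHom.coe_mk,
        ← inner_self_eq_norm_sq (𝕜 := 𝕜), R.inner_Kx]
      calc RCLike.re ⟪K x.val x.val h, h⟫_𝕜 ≤ ‖K x.val x.val h‖ * ‖h‖ := re_inner_le_norm _ _
        _ ≤ ‖K x.val x.val‖ * ‖h‖ * ‖h‖ :=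
          mul_le_mul_of_nonneg_right ((K x.val x.val).le_opNorm h) (norm_nonneg h)
        _ = ‖K x.val x.val‖ * ‖h‖ ^ 2 := by ring

theorem dense_span_Kx :
    Dense (Submodule.span 𝕜 (Set.range fun q : Σ x : {x : X // A.a x = s}, E (p x.val) =>
      R.Kx q.1 q.2) : Set R.carrier) := by
  rw [Submodule.dense_iff_topologicalClosure_eq_top, Submodule.topologicalClosure_eq_top_iff,
    Submodule.eq_bot_iff]
  intro f hf
  refine R.emb_inj (funext fun x => ?_)
  have hfx := (Submodule.mem_orthogonal _ f).1 hf _ (Submodule.subset_span ⟨⟨x, R.emb f x⟩, rfl⟩)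
  rw [map_zero, Pi.zero_apply, ← inner_self_eq_zero (𝕜 := 𝕜), R.repro]
  exact inner_eq_zero_symm.1 hfx

abbrev toHSp : HSp.{u, w'} 𝕜 := ⟨R.carrier⟩

end

variable (R : ∀ s : S, RKHSOn.{u, uΓ, uS, v, vO, w, w'} 𝕜 E A p K s)

theorem castH_kernelCLM {t : S} (x : X) (h : A.a x = t) (k : E (p x)) :
    castH 𝕜 (fun s => (R s).toHSp) h ((R (A.a x)).kernelCLM ⟨x, rfl⟩ k) = (R t).Kx ⟨x, h⟩ k := by
  subst h; rfl

theorem isMinimalLinearisation :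
    IsMinimalLinearisation A p K (fun s => (R s).toHSp)
      (fun x => (R (A.a x)).kernelCLM ⟨x, rfl⟩) := by
  refine ⟨fun x y hxy k h => ?_, fun s => ?_⟩
  · dsimp only
    rw [castH_kernelCLM]
    exact ((R (A.a x)).inner_Kx ⟨y, hxy⟩ ⟨x, rfl⟩ k h).symm
  · have hfeature : fibreFeature (𝒦 := fun s => (R s).toHSp)
        (fun x => (R (A.a x)).kernelCLM ⟨x, rfl⟩) s =
        fun q : Σ x : {x : X // A.a x = s}, E (p x.val) =>
          ((R s).Kx q.1 q.2 : (R s).toHSp.carrier) :=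
      funext fun q => castH_kernelCLM R q.1.1 q.1.2 q.2
    rw [hfeature]
    exact (R s).dense_span_Kx

theorem intertwinesShift_iff
    {Φ : ∀ α : Γ, (R (G.d α)).carrier →L[𝕜] (R (G.c α)).carrier} :
    IntertwinesShift hp (𝒦 := fun s => (R s).toHSp)
        (fun x => (R (A.a x)).kernelCLM ⟨x, rfl⟩) Φ ↔
      ∀ (α : Γ) (x : X) (hx : G.d α = A.a x) (h : E (p x)),
        Φ α ((R (G.d α)).Kx ⟨x, hx.symm⟩ h) =
          (R (G.c α)).Kx ⟨A.act α x, A.a_act hx⟩ ((castE 𝕜 E (hp hx)).symm h) := by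
  refine forall₄_congr fun α x hx h => ?_
  dsimp only
  rw [castH_kernelCLM R x hx.symm h, castH_kernelCLM R (A.act α x) (A.a_act hx)]

theorem exists_minimalLinearisation
    (R : ∀ s : S, RKHSOn.{u, uΓ, uS, v, vO, w, w'} 𝕜 E A p K s) :
    ∃ (𝒦 : S → HSp.{u, max v w} 𝕜) (V : ∀ x : X, E (p x) →L[𝕜] (𝒦 (A.a x)).carrier),
      IsMinimalLinearisation A p K 𝒦 V := by
  choose 𝒦 hU using fun s => HSp.exists_linearIsometryEquiv_of_injective (R s).emb_inj
  exact ⟨𝒦, _, (isMinimalLinearisation R).map fun s => (hU s).some⟩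

end RKHSOn

end Linearisation

theorem bounded_shift_tfae_invariant_linearisation
    (K : ∀ y x : X, E (p x) →L[𝕜] E (p y))
    (hKinv : GammaInvariant A p hp K)
    (R : ∀ s : S, RKHSOn.{u, uΓ, uS, v, vO, w, w'} 𝕜 E A p K s) :
    (BoundedShiftType A p hp K ↔
      (∃ Φ : ∀ α : Γ, (R (G.d α)).carrier →L[𝕜] (R (G.c α)).carrier,
        ((∀ (α β : Γ) (hc : G.d α = G.c β) (f : (R (G.d β)).carrier),
          Φ (G.mul α β) (castR A p R (G.d_mul hc).symm f) =
            castR A p R (G.c_mul hc).symm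
              (Φ α (castR A p R hc.symm (Φ β f)))) ∧
        (∀ (α : Γ) (g : (R (G.c α)).carrier),
          castR A p R (G.c_star α)
              (Φ (G.star α) (castR A p R (G.d_star α).symm g)) =
            ContinuousLinearMap.adjoint (Φ α) g) ∧
        (∀ (α : Γ) (x : X) (hx : G.d α = A.a x) (h : E (p x)),
          Φ α ((R (G.d α)).Kx ⟨x, hx.symm⟩ h) =
            (R (G.c α)).Kx ⟨A.act α x, A.a_act hx⟩
              ((castE 𝕜 E (hp hx)).symm h))) ∧
        ∀ Φ' : ∀ α : Γ, (R (G.d α)).carrier →L[𝕜] (R (G.c α)).carrier,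
          ((∀ (α β : Γ) (hc : G.d α = G.c β) (f : (R (G.d β)).carrier),
            Φ' (G.mul α β) (castR A p R (G.d_mul hc).symm f) =
              castR A p R (G.c_mul hc).symm
                (Φ' α (castR A p R hc.symm (Φ' β f)))) ∧
          (∀ (α : Γ) (g : (R (G.c α)).carrier),
            castR A p R (G.c_star α)
                (Φ' (G.star α) (castR A p R (G.d_star α).symm g)) =
              ContinuousLinearMap.adjoint (Φ' α) g) ∧
          (∀ (α : Γ) (x : X) (hx : G.d α = A.a x) (h : E (p x)),
            Φ' α ((R (G.d α)).Kx ⟨x, hx.symm⟩ h) =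
              (R (G.c α)).Kx ⟨A.act α x, A.a_act hx⟩
                ((castE 𝕜 E (hp hx)).symm h))) → Φ' = Φ)) ∧
    (BoundedShiftType A p hp K ↔
      ∃ L : InvLin.{u, uΓ, uS, v, vO, w, max v w} 𝕜 E A p hp K,
        InvLin.Minimal L ∧
        ∀ L' : InvLin.{u, uΓ, uS, v, vO, w, max v w} 𝕜 E A p hp K,
          InvLin.Minimal L' →
          ∃ U : ∀ s : S, (L.Ksp s).carrier ≃ₗᵢ[𝕜] (L'.Ksp s).carrier,
            (∀ (α : Γ) (f : (L.Ksp (G.d α)).carrier),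
              U (G.c α) (L.Ψ α f) = L'.Ψ α (U (G.d α) f)) ∧
            (∀ (x : X) (h : E (p x)), U (A.a x) (L.V x h) = L'.V x h)) := by
  have hR := RKHSOn.isMinimalLinearisation R
  refine ⟨⟨fun hB => ?_, fun ⟨Φ, ⟨_, _, hΦ⟩, _⟩ =>
      hR.1.boundedShiftType ((RKHSOn.intertwinesShift_iff R).2 hΦ)⟩,
    ⟨fun hB => ?_, fun ⟨L, _, _⟩ => IsLinearisation.boundedShiftType L.lin L.Ψ_shift⟩⟩
  · obtain ⟨Φ, hΦ⟩ := hR.exists_intertwinesShift hB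
    obtain ⟨hmul, hstar⟩ := hR.isStarRepresentation hKinv hΦ
    exact ⟨Φ, ⟨hmul, hstar, (RKHSOn.intertwinesShift_iff R).1 hΦ⟩, fun Φ' ⟨_, _, hΦ'⟩ =>
      hR.intertwinesShift_unique hΦ ((RKHSOn.intertwinesShift_iff R).2 hΦ')⟩
  · obtain ⟨𝒦, V, hV⟩ := RKHSOn.exists_minimalLinearisation R
    obtain ⟨Ψ, hΨ⟩ := hV.exists_intertwinesShift hB
    obtain ⟨hmul, hstar⟩ := hV.isStarRepresentation hKinv hΨ
    refine ⟨⟨𝒦, V, hV.1, Ψ, hmul, hstar, hΨ⟩, (InvLin.minimal_iff _).2 hV.2, fun L' hL' => ?_⟩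
    exact hV.exists_linearIsometryEquiv ⟨L'.lin, (InvLin.minimal_iff L').1 hL'⟩ hΨ L'.Ψ_shift
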